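/- Let d ∈ ℕ and δ ∈ (0, π/2), and suppose N_{d,δ} > 0. Define F_{d,δ}(x) = ∫_{−π}^{π} M_{d,δ}(x') H(x − x') dx'. Then for every x ∈ ℝ one has −2π/N_{d,δ} ≤ F_{d,δ}(x) ≤ 1 + 4π/N_{d,δ}. -/

import Mathlib

/-! Since the argument of `T_d` in `g_{d,δ}` is at least `-1` and `T_d ≥ -1` on `[-1, ∞)`, the
kernel satisfies `g_{d,δ} ≥ -1`. As `H` takes values in `[0, 1]`, this gives pointwise
`-1 ≤ g_{d,δ}(x') H(x - x') ≤ g_{d,δ}(x') + 1`; integrating over `[-π, π]` and dividing by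
`N_{d,δ} > 0` yields `-2π/N ≤ F ≤ 1 + 2π/N`. -/

open Real Classical

/-- The 2π-periodic Heaviside function: `H(x) = 1` for `x ∈ [2kπ, (2k+1)π)` and
`H(x) = 0` for `x ∈ [(2k−1)π, 2kπ)`, `k ∈ ℤ`. -/
noncomputable def Hper (x : ℝ) : ℝ :=
  if ∃ k : ℤ, 2 * k * π ≤ x ∧ x < (2 * k + 1) * π then 1 else 0

/-- `g_{d,δ}(x) = T_d(1 + 2(cos x − cos δ)/(1 + cos δ))`. -/
noncomputable def chebG (d : ℕ) (δ x : ℝ) : ℝ :=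
  (Polynomial.Chebyshev.T ℝ d).eval (1 + 2 * (Real.cos x - Real.cos δ) / (1 + Real.cos δ))

/-- `N_{d,δ} = ∫_{−π}^{π} g_{d,δ}(x) dx`. -/
noncomputable def chebN (d : ℕ) (δ : ℝ) : ℝ := ∫ x in (-π)..π, chebG d δ x

/-- `M_{d,δ} = g_{d,δ}/N_{d,δ}`. -/
noncomputable def chebM (d : ℕ) (δ x : ℝ) : ℝ := chebG d δ x / chebN d δ

open MeasureTheory Set

theorem Polynomial.Chebyshev.neg_one_le_eval_T_real (n : ℤ) {x : ℝ} (hx : -1 ≤ x) :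
    -1 ≤ (T ℝ n).eval x := by
  rcases le_total x 1 with hx1 | hx1
  · exact (eval_T_real_mem_Icc n ⟨hx, hx1⟩).1
  · linarith [one_le_eval_T_real n hx1]

lemma neg_one_le_chebG (d : ℕ) (δ x : ℝ) : -1 ≤ chebG d δ x := by
  refine Polynomial.Chebyshev.neg_one_le_eval_T_real d ?_
  have hx : 0 ≤ 1 + cos x := by linarith [neg_one_le_cos x]
  have hδ : 0 ≤ 1 + cos δ := by linarith [neg_one_le_cos δ]
  -- Splitting off `(1 + cos δ) / (1 + cos δ) ≤ 1` also covers the junk case `cos δ = -1`.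
  have key : -1 ≤ (cos x - cos δ) / (1 + cos δ) := calc
    -1 ≤ (1 + cos x) / (1 + cos δ) - (1 + cos δ) / (1 + cos δ) := by
        linarith [div_nonneg hx hδ, div_self_le_one (1 + cos δ)]
    _ = (cos x - cos δ) / (1 + cos δ) := by rw [← sub_div]; ring_nf
  rw [mul_div_assoc]
  linarith

lemma continuous_chebG (d : ℕ) (δ : ℝ) : Continuous (chebG d δ) := by
  unfold chebG
  fun_prop

lemma Hper_mem_Icc (x : ℝ) : Hper x ∈ Icc 0 1 := by
  unfold Hper
  split <;> simp

lemma measurable_Hper : Measurable Hper := by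
  refine Measurable.ite ?_ measurable_const measurable_const
  simp only [ofPred_exists]
  exact MeasurableSet.iUnion fun k => measurableSet_Ici.inter measurableSet_Iio

section WeightedIntegral

variable {a b : ℝ} {g h : ℝ → ℝ}

lemma IntervalIntegrable.mul_of_mem_Icc (hg : IntervalIntegrable g volume a b)
    (hh : AEStronglyMeasurable h) (h01 : ∀ x, h x ∈ Icc 0 1) :
    IntervalIntegrable (fun x => g x * h x) volume a b := by
  refine hg.mono_fun (hg.def'.aestronglyMeasurable.mul hh.restrict) (ae_of_all _ fun x => ?_)
  have := h01 x
  show ‖g x * h x‖ ≤ ‖g x‖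
  rw [norm_mul, Real.norm_of_nonneg this.1]
  exact mul_le_of_le_one_right (norm_nonneg _) this.2

lemma neg_sub_le_integral_mul (hab : a ≤ b) (hg : IntervalIntegrable g volume a b)
    (hg1 : ∀ x, -1 ≤ g x) (hh : AEStronglyMeasurable h) (h01 : ∀ x, h x ∈ Icc 0 1) :
    -(b - a) ≤ ∫ x in a..b, g x * h x := by
  have hle : ∀ x ∈ Icc a b, -1 ≤ g x * h x := fun x _ => by
    nlinarith [mul_nonneg (neg_le_iff_add_nonneg.mp (hg1 x)) (h01 x).1, (h01 x).2]
  calc -(b - a) = ∫ _ in a..b, (-1 : ℝ) := by simp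
    _ ≤ ∫ x in a..b, g x * h x :=
      intervalIntegral.integral_mono_on hab intervalIntegrable_const
        (hg.mul_of_mem_Icc hh h01) hle

lemma integral_mul_le_integral_add_sub (hab : a ≤ b) (hg : IntervalIntegrable g volume a b)
    (hg1 : ∀ x, -1 ≤ g x) (hh : AEStronglyMeasurable h) (h01 : ∀ x, h x ∈ Icc 0 1) :
    ∫ x in a..b, g x * h x ≤ (∫ x in a..b, g x) + (b - a) := by
  have hle : ∀ x ∈ Icc a b, g x * h x ≤ g x + 1 := fun x _ => by
    nlinarith [mul_nonneg (neg_le_iff_add_nonneg.mp (hg1 x)) (sub_nonneg.mpr (h01 x).2), (h01 x).1]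
  calc ∫ x in a..b, g x * h x ≤ ∫ x in a..b, (g x + 1) :=
      intervalIntegral.integral_mono_on hab (hg.mul_of_mem_Icc hh h01)
        (hg.add intervalIntegrable_const) hle
    _ = (∫ x in a..b, g x) + (b - a) := by
      rw [intervalIntegral.integral_add hg intervalIntegrable_const]
      simp

end WeightedIntegral

theorem stmt_6_general (d : ℕ) (δ : ℝ) (hN : 0 < chebN d δ)
    (x : ℝ) :
    -(2 * π) / chebN d δ ≤ (∫ x' in (-π)..π, chebM d δ x' * Hper (x - x')) ∧
    (∫ x' in (-π)..π, chebM d δ x' * Hper (x - x')) ≤ 1 + 4 * π / chebN d δ := by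
  have hab : -π ≤ π := by linarith [pi_pos]
  have hg : IntervalIntegrable (chebG d δ) volume (-π) π :=
    (continuous_chebG d δ).intervalIntegrable _ _
  have hH : AEStronglyMeasurable fun x' => Hper (x - x') :=
    (measurable_Hper.comp (measurable_const.sub measurable_id)).aestronglyMeasurable
  have hlow := neg_sub_le_integral_mul hab hg (neg_one_le_chebG d δ) hH fun _ => Hper_mem_Icc _
  have hup := integral_mul_le_integral_add_sub hab hg (neg_one_le_chebG d δ) hH
    fun _ => Hper_mem_Icc _
  have hF : ∫ x' in (-π)..π, chebM d δ x' * Hper (x - x')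
      = (∫ x' in (-π)..π, chebG d δ x' * Hper (x - x')) / chebN d δ := by
    simp_rw [chebM, div_mul_eq_mul_div]
    exact intervalIntegral.integral_div _ _
  rw [hF]
  constructor
  · exact div_le_div_of_nonneg_right (by linarith) hN.le
  · calc _ ≤ (chebN d δ + 2 * π) / chebN d δ :=
          div_le_div_of_nonneg_right (by rw [chebN]; linarith) hN.le
      _ = 1 + 2 * π / chebN d δ := by field_simp
      _ ≤ 1 + 4 * π / chebN d δ := by gcongr; linarith [pi_pos]

theorem stmt_6 (d : ℕ) (δ : ℝ) (hδ : δ ∈ Set.Ioo 0 (π / 2)) (hN : 0 < chebN d δ)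
    (x : ℝ) :
    -(2 * π) / chebN d δ ≤ (∫ x' in (-π)..π, chebM d δ x' * Hper (x - x')) ∧
    (∫ x' in (-π)..π, chebM d δ x' * Hper (x - x')) ≤ 1 + 4 * π / chebN d δ :=
  stmt_6_general d δ hN x
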